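/- arXiv:0902.2569 — 3 statements merged into one kernel-verified Lean document; each statement's English description precedes it below -/
import Mathlib

section
/- Let b : (0,T] → ℝ be continuously differentiable with finite left limit b(0) ∈ (-∞, 0), and suppose lim_{t↓0} |b'(t)| t^ε < ∞ for some 0 < ε < 1/2. Then there exists a constant C > 0 such that |(b(t) - b(s))/√(t-s)| < C for all 0 ≤ s < t ≤ T. -/
open Set Filter Real

/-- Subadditivity of `x ^ p` for `0 ≤ p ≤ 1`, in subtraction form. -/
lemma sub_rpow_le_rpow_sub {s t p : ℝ} (hs : 0 ≤ s) (hst : s ≤ t)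
    (hp0 : 0 ≤ p) (hp1 : p ≤ 1) : t ^ p - s ^ p ≤ (t - s) ^ p := by
  have hu : 0 ≤ t - s := sub_nonneg.2 hst
  have key : (s + (t - s)) ^ p ≤ s ^ p + (t - s) ^ p := by
    have h := NNReal.rpow_add_le_add_rpow s.toNNReal (t - s).toNNReal hp0 hp1
    have h' := NNReal.coe_le_coe.2 h
    push_cast at h'
    rwa [Real.coe_toNNReal _ hs, Real.coe_toNNReal _ hu] at h'
  have : t ^ p ≤ s ^ p + (t - s) ^ p := by simpa using key
  linarith

/-- If `b` is continuously differentiable on `(0,T]`, extended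
continuously to `[0,T]` with `b 0 < 0`, and `|b'(t)| t^ε` has a finite limit as
`t ↓ 0` for some `0 < ε < 1/2`, then `|(b t - b s)/√(t-s)|` is bounded on
`0 ≤ s < t ≤ T`. -/
theorem stmt0 (T : ℝ) (hT : 0 < T) (b b' : ℝ → ℝ) (ε : ℝ) (hε : 0 < ε) (hε' : ε < 1/2)
    (hderiv : ∀ t ∈ Set.Ioc (0:ℝ) T, HasDerivAt b (b' t) t)
    (hb'cont : ContinuousOn b' (Set.Ioc 0 T))
    (hbcont : ContinuousOn b (Set.Icc 0 T))
    (hb0 : b 0 < 0)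
    (hlim : ∃ L : ℝ, Filter.Tendsto (fun t => |b' t| * t ^ ε) (nhdsWithin 0 (Set.Ioi 0)) (nhds L)) :
    ∃ C > 0, ∀ s t : ℝ, 0 ≤ s → s < t → t ≤ T →
      |(b t - b s) / Real.sqrt (t - s)| < C := by
  obtain ⟨L, hL⟩ := hlim
  have hev : {u : ℝ | |b' u| * u ^ ε < |L| + 1} ∈ nhdsWithin 0 (Set.Ioi 0) :=
    hL.eventually_lt_const (by cases abs_cases L <;> linarith)
  obtain ⟨δ, hδpos, hδ⟩ := Metric.mem_nhdsWithin_iff.1 hev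
  set δ₁ : ℝ := min δ T with hδ₁def
  have hδ₁pos : 0 < δ₁ := lt_min hδpos hT
  -- bound on the compact part
  obtain ⟨K, hK⟩ := isCompact_Icc.exists_bound_of_continuousOn
    (hb'cont.mono (fun x (hx : x ∈ Set.Icc δ₁ T) => ⟨lt_of_lt_of_le hδ₁pos hx.1, hx.2⟩))
  -- global bound `|b' u| ≤ A * u ^ (-ε)` on `(0, T]`
  set A : ℝ := max (|L| + 1) ((|K| + 1) * T ^ ε) with hAdef
  have hApos : 0 < A := lt_max_of_lt_left (by positivity)
  have hbound : ∀ u ∈ Set.Ioc (0:ℝ) T, |b' u| ≤ A * u ^ (-ε) := by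
    intro u hu
    have hupos : (0:ℝ) < u := hu.1
    have hrpos : (0:ℝ) < u ^ ε := Real.rpow_pos_of_pos hupos ε
    have goal_iff : |b' u| * u ^ ε ≤ A → |b' u| ≤ A * u ^ (-ε) := by
      intro h
      rw [Real.rpow_neg hupos.le, ← div_eq_mul_inv, le_div_iff₀ hrpos]
      exact h
    rcases lt_or_ge u δ₁ with h | h
    · refine goal_iff ?_
      have hmem : u ∈ Metric.ball (0:ℝ) δ ∩ Set.Ioi 0 := by
        constructor
        · simp only [Metric.mem_ball, Real.dist_eq, sub_zero, abs_of_pos hupos]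
          exact lt_of_lt_of_le h (min_le_left _ _)
        · exact hupos
      exact (hδ hmem).le.trans (le_max_left _ _)
    · refine goal_iff ?_
      have h1 : |b' u| ≤ K := by simpa [Real.norm_eq_abs] using hK u ⟨h, hu.2⟩
      have h2 : u ^ ε ≤ T ^ ε := Real.rpow_le_rpow hupos.le hu.2 hε.le
      have h3 : |b' u| * u ^ ε ≤ (|K| + 1) * T ^ ε := by
        have := mul_le_mul (h1.trans (by cases abs_cases K <;> linarith)) h2
          hrpos.le (by positivity)
        linarith
      exact h3.trans (le_max_right _ _)
  -- comparison function
  have h1ε : (0:ℝ) < 1 - ε := by linarith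
  set B : ℝ := A / (1 - ε) with hBdef
  have hBpos : 0 < B := div_pos hApos h1ε
  set g : ℝ → ℝ := fun u => B * u ^ (1 - ε) with hgdef
  have hg : ∀ u : ℝ, 0 < u → HasDerivAt g (A * u ^ (-ε)) u := by
    intro u hu
    have h := (Real.hasDerivAt_rpow_const (p := 1 - ε) (Or.inl hu.ne')).const_mul B
    have heq : B * ((1 - ε) * u ^ (1 - ε - 1)) = A * u ^ (-ε) := by
      rw [show (1 - ε - 1 : ℝ) = -ε by ring, ← mul_assoc, div_mul_cancel₀ _ h1ε.ne']
    rwa [heq] at h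
  -- key inequality for `s > 0`
  have key : ∀ s t : ℝ, 0 < s → s < t → t ≤ T →
      |b t - b s| ≤ B * (t ^ (1 - ε) - s ^ (1 - ε)) := by
    intro s t hs hst htT
    have hsub : Set.Icc s t ⊆ Set.Ioc 0 T := fun x hx => ⟨lt_of_lt_of_le hs hx.1, hx.2.trans htT⟩
    have hsub' : Set.Ioo s t ⊆ Set.Ioc 0 T := fun x hx => hsub ⟨hx.1.le, hx.2.le⟩
    have hint : interior (Set.Icc s t) = Set.Ioo s t := interior_Icc
    have habs : ∀ x ∈ Set.Ioo s t, |b' x| ≤ A * x ^ (-ε) := fun x hx => hbound x (hsub' hx)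
    have mono : ∀ (c : ℝ), (∀ x ∈ Set.Ioo s t, 0 ≤ A * x ^ (-ε) + c * b' x) →
        MonotoneOn (fun u => g u + c * b u) (Set.Icc s t) := by
      intro c hc
      apply monotoneOn_of_hasDerivWithinAt_nonneg (f' := fun x => A * x ^ (-ε) + c * b' x)
        (convex_Icc s t)
      · intro x hx
        have hx' := hsub hx
        exact ((hg x hx'.1).add ((hderiv x hx').const_mul c)).continuousAt.continuousWithinAt
      · intro x hx
        rw [hint] at hx
        have hx' := hsub' hx
        exact (((hg x hx'.1).add ((hderiv x hx').const_mul c)).hasDerivWithinAt)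
      · intro x hx
        rw [hint] at hx
        exact hc x hx
    have m1 := mono 1 (fun x hx => by
      have := (abs_le.1 (habs x hx)).1; linarith)
    have m2 := mono (-1) (fun x hx => by
      have := (abs_le.1 (habs x hx)).2; linarith)
    have e1 := m1 (Set.left_mem_Icc.2 hst.le) (Set.right_mem_Icc.2 hst.le) hst.le
    have e2 := m2 (Set.left_mem_Icc.2 hst.le) (Set.right_mem_Icc.2 hst.le) hst.le
    simp only [one_mul, neg_one_mul, neg_mul] at e1 e2
    rw [abs_le]
    constructor <;> simp only [hgdef] at e1 e2 <;> [linarith; linarith]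
  -- extend to `s ≥ 0` with subadditive bound
  have key2 : ∀ s t : ℝ, 0 ≤ s → s < t → t ≤ T →
      |b t - b s| ≤ B * (t - s) ^ (1 - ε) := by
    intro s t hs hst htT
    rcases hs.lt_or_eq with hs' | hs'
    · refine (key s t hs' hst htT).trans ?_
      exact mul_le_mul_of_nonneg_left
        (sub_rpow_le_rpow_sub hs'.le hst.le h1ε.le (by linarith)) hBpos.le
    · subst hs'
      have htpos : (0:ℝ) < t := hst
      haveI : (nhdsWithin (0:ℝ) (Set.Ioo 0 t)).NeBot := left_nhdsWithin_Ioo_neBot htpos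
      have hbl : Filter.Tendsto b (nhdsWithin (0:ℝ) (Set.Ioo 0 t)) (nhds (b 0)) := by
        refine (hbcont.continuousWithinAt ⟨le_refl 0, hT.le⟩).mono_left ?_
        exact nhdsWithin_mono _ (fun x hx => ⟨hx.1.le, hx.2.le.trans htT⟩)
      have htend : Filter.Tendsto (fun u => |b t - b u|)
          (nhdsWithin (0:ℝ) (Set.Ioo 0 t)) (nhds |b t - b 0|) :=
        (tendsto_const_nhds.sub hbl).abs
      have hevb : ∀ᶠ u in nhdsWithin (0:ℝ) (Set.Ioo 0 t),
          |b t - b u| ≤ B * t ^ (1 - ε) := by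
        filter_upwards [self_mem_nhdsWithin] with u hu
        refine (key u t hu.1 hu.2 htT).trans ?_
        have : (0:ℝ) ≤ u ^ (1 - ε) := Real.rpow_nonneg hu.1.le _
        nlinarith [hBpos.le]
      have := le_of_tendsto htend hevb
      simpa using this
  -- conclude
  refine ⟨B * T ^ (1 - ε - 1/2) + 1, by positivity, ?_⟩
  intro s t hs hst htT
  have hts : (0:ℝ) < t - s := sub_pos.2 hst
  have hsq : (0:ℝ) < Real.sqrt (t - s) := Real.sqrt_pos.2 hts
  rw [abs_div, abs_of_nonneg (Real.sqrt_nonneg _), div_lt_iff₀ hsq]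
  have step1 : |b t - b s| ≤ B * (t - s) ^ (1 - ε) := key2 s t hs hst htT
  have step2 : B * (t - s) ^ (1 - ε) = B * (t - s) ^ (1 - ε - 1/2) * Real.sqrt (t - s) := by
    rw [Real.sqrt_eq_rpow, mul_assoc, ← Real.rpow_add hts]
    ring_nf
  have step3 : (t - s) ^ (1 - ε - 1/2) ≤ T ^ (1 - ε - 1/2) :=
    Real.rpow_le_rpow hts.le (by linarith) (by linarith)
  have step4 : B * (t - s) ^ (1 - ε - 1/2) * Real.sqrt (t - s) ≤
      B * T ^ (1 - ε - 1/2) * Real.sqrt (t - s) := by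
    have := mul_le_mul_of_nonneg_left step3 hBpos.le
    exact mul_le_mul_of_nonneg_right this hsq.le
  have step5 : B * T ^ (1 - ε - 1/2) * Real.sqrt (t - s) <
      (B * T ^ (1 - ε - 1/2) + 1) * Real.sqrt (t - s) := by
    apply mul_lt_mul_of_pos_right _ hsq
    linarith
  calc |b t - b s| ≤ B * (t - s) ^ (1 - ε) := step1
    _ = B * (t - s) ^ (1 - ε - 1/2) * Real.sqrt (t - s) := step2
    _ ≤ B * T ^ (1 - ε - 1/2) * Real.sqrt (t - s) := step4
    _ < (B * T ^ (1 - ε - 1/2) + 1) * Real.sqrt (t - s) := step5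
end

section
/- Let b : (0,T] → ℝ be continuously differentiable with finite limit b(0) < 0, and suppose lim_{t↓0} |b'(t)| t^ε < ∞ for some 0 < ε < 1/2. Then there exists K > 0 such that |(b(t) - b(s))/(t-s)| · t^ε < K for all 0 ≤ s < t ≤ T. -/
/-!
The limit at `0` and compactness away from `0` bound `|b'(u)| u^ε` by some `C` on `(0,T]`, so
`|b'|` is dominated by `g'`, where `g(u) = C u^(1-ε) / (1-ε)`. Then `g - b` and
`g + b` are nondecreasing on `[0,T]`, so `|b t - b s| ≤ g t - g s`, and since `s ≤ t^ε s^(1-ε)`,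
`(t^(1-ε) - s^(1-ε)) t^ε ≤ t - s`: the weighted difference quotient is at most `C / (1-ε)`.
-/

open Set Filter Topology

lemma bddAbove_image_Ioc_of_tendsto_nhdsGT {f : ℝ → ℝ} {a b L : ℝ}
    (hf : ContinuousOn f (Ioc a b)) (hlim : Tendsto f (𝓝[>] a) (𝓝 L)) :
    BddAbove (f '' Ioc a b) := by
  obtain ⟨M, hM⟩ := hlim.isBoundedUnder_le
  obtain ⟨c, hac, hc⟩ := mem_nhdsGT_iff_exists_Ioo_subset.mp (eventually_map.mp hM)
  have hnear : BddAbove (f '' Ioo a c) := ⟨M, by rintro _ ⟨x, hx, rfl⟩; exact hc hx⟩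
  have hfar : BddAbove (f '' Icc c b) :=
    isCompact_Icc.bddAbove_image (hf.mono fun x hx => ⟨hac.trans_le hx.1, hx.2⟩)
  refine (hnear.union hfar).mono ?_
  rw [← image_union]
  refine image_mono fun x hx => ?_
  rcases lt_or_ge x c with h | h
  exacts [Or.inl ⟨hx.1, h⟩, Or.inr ⟨h, hx.2⟩]

lemma abs_sub_le_sub_of_abs_deriv_le {f f' g g' : ℝ → ℝ} {a b : ℝ}
    (hf : ContinuousOn f (Icc a b)) (hg : ContinuousOn g (Icc a b))
    (hf' : ∀ x ∈ Ioo a b, HasDerivAt f (f' x) x) (hg' : ∀ x ∈ Ioo a b, HasDerivAt g (g' x) x)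
    (hle : ∀ x ∈ Ioo a b, |f' x| ≤ g' x) {s t : ℝ} (hs : s ∈ Icc a b) (ht : t ∈ Icc a b)
    (hst : s ≤ t) : |f t - f s| ≤ g t - g s := by
  have hsub : MonotoneOn (fun x => g x - f x) (Icc a b) :=
    monotoneOn_of_hasDerivWithinAt_nonneg (convex_Icc a b) (hg.sub hf)
      (fun x hx => ((hg' x (by simpa using hx)).sub (hf' x (by simpa using hx))).hasDerivWithinAt)
      (fun x hx => by linarith [hle x (by simpa using hx), le_abs_self (f' x)])
  have hadd : MonotoneOn (fun x => g x + f x) (Icc a b) :=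
    monotoneOn_of_hasDerivWithinAt_nonneg (convex_Icc a b) (hg.add hf)
      (fun x hx => ((hg' x (by simpa using hx)).add (hf' x (by simpa using hx))).hasDerivWithinAt)
      (fun x hx => by linarith [hle x (by simpa using hx), neg_abs_le (f' x)])
  have h₁ : g s - f s ≤ g t - f t := hsub hs ht hst
  have h₂ : g s + f s ≤ g t + f t := hadd hs ht hst
  exact abs_le.mpr ⟨by linarith, by linarith⟩

lemma rpow_one_sub_sub_rpow_one_sub_mul_rpow_le {s t ε : ℝ} (hs : 0 ≤ s) (hst : s ≤ t)
    (hε : 0 ≤ ε) : (t ^ (1 - ε) - s ^ (1 - ε)) * t ^ ε ≤ t - s := by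
  have hpow (x : ℝ) (hx : 0 ≤ x) : x ^ (1 - ε) * x ^ ε = x := by
    rw [← Real.rpow_add' hx (by norm_num), sub_add_cancel, Real.rpow_one]
  have hmono : s ^ (1 - ε) * s ^ ε ≤ s ^ (1 - ε) * t ^ ε :=
    mul_le_mul_of_nonneg_left (Real.rpow_le_rpow hs hst hε) (Real.rpow_nonneg hs _)
  linarith [hpow s hs, hpow t (hs.trans hst)]

theorem abs_sub_mul_rpow_le_of_abs_deriv_mul_rpow_le {f f' : ℝ → ℝ} {T C ε : ℝ} (hC : 0 ≤ C)
    (hε₀ : 0 ≤ ε) (hε₁ : ε < 1) (hf : ContinuousOn f (Icc 0 T))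
    (hf' : ∀ x ∈ Ioo 0 T, HasDerivAt f (f' x) x) (hbound : ∀ x ∈ Ioo 0 T, |f' x| * x ^ ε ≤ C)
    {s t : ℝ} (hs : 0 ≤ s) (hst : s ≤ t) (htT : t ≤ T) :
    |f t - f s| * t ^ ε ≤ C / (1 - ε) * (t - s) := by
  set g : ℝ → ℝ := fun x => C / (1 - ε) * x ^ (1 - ε)
  have hg : ContinuousOn g (Icc 0 T) :=
    (continuous_const.mul (Real.continuous_rpow_const (by linarith))).continuousOn
  have hg' : ∀ x ∈ Ioo 0 T, HasDerivAt g (C * x ^ (-ε)) x := by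
    intro x hx
    refine ((Real.hasDerivAt_rpow_const (Or.inl hx.1.ne')).const_mul (C / (1 - ε))).congr_deriv ?_
    rw [sub_sub_cancel_left, ← mul_assoc, div_mul_cancel₀ C (by linarith)]
  have hle : ∀ x ∈ Ioo 0 T, |f' x| ≤ C * x ^ (-ε) := by
    intro x hx
    rw [Real.rpow_neg hx.1.le, ← div_eq_mul_inv, le_div_iff₀ (Real.rpow_pos_of_pos hx.1 ε)]
    exact hbound x hx
  have hfg : |f t - f s| ≤ g t - g s :=
    abs_sub_le_sub_of_abs_deriv_le hf hg hf' hg' hle ⟨hs, hst.trans htT⟩ ⟨hs.trans hst, htT⟩ hst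
  calc |f t - f s| * t ^ ε ≤ (g t - g s) * t ^ ε :=
        mul_le_mul_of_nonneg_right hfg (Real.rpow_nonneg (hs.trans hst) ε)
    _ = C / (1 - ε) * ((t ^ (1 - ε) - s ^ (1 - ε)) * t ^ ε) := by ring
    _ ≤ C / (1 - ε) * (t - s) :=
        mul_le_mul_of_nonneg_left (rpow_one_sub_sub_rpow_one_sub_mul_rpow_le hs hst hε₀)
          (div_nonneg hC (by linarith))

theorem stmt1_general (T : ℝ) (b b' : ℝ → ℝ) (ε : ℝ) (hε : 0 < ε) (hε' : ε < 1/2)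
    (hderiv : ∀ t ∈ Set.Ioc (0:ℝ) T, HasDerivAt b (b' t) t)
    (hb'cont : ContinuousOn b' (Set.Ioc 0 T))
    (hbcont : ContinuousOn b (Set.Icc 0 T))
    (hlim : ∃ L : ℝ, Filter.Tendsto (fun t => |b' t| * t ^ ε) (nhdsWithin 0 (Set.Ioi 0)) (nhds L)) :
    ∃ K > 0, ∀ s t : ℝ, 0 ≤ s → s < t → t ≤ T →
      |(b t - b s) / (t - s)| * t ^ ε < K := by
  obtain ⟨L, hL⟩ := hlim
  have hcont : ContinuousOn (fun t => |b' t| * t ^ ε) (Ioc 0 T) :=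
    hb'cont.abs.mul (continuousOn_id.rpow_const fun u hu => Or.inl hu.1.ne')
  obtain ⟨C, hC⟩ := bddAbove_image_Ioc_of_tendsto_nhdsGT hcont hL
  have hε₁ : ε < 1 := by linarith
  refine ⟨max C 0 / (1 - ε) + 1, by positivity [sub_pos.mpr hε₁], fun s t hs hst htT => ?_⟩
  have key := abs_sub_mul_rpow_le_of_abs_deriv_mul_rpow_le (le_max_right C 0) hε.le hε₁ hbcont
    (fun x hx => hderiv x (Ioo_subset_Ioc_self hx))
    (fun x hx => (hC (mem_image_of_mem _ (Ioo_subset_Ioc_self hx))).trans (le_max_left C 0))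
    hs hst.le htT
  have hts : 0 < t - s := sub_pos.mpr hst
  rw [abs_div, abs_of_pos hts, div_mul_eq_mul_div, div_lt_iff₀ hts]
  linarith

/-- If `b` is continuously differentiable on `(0,T]`, extended
continuously to `[0,T]` with `b 0 < 0`, and `|b'(t)| t^ε` has a finite limit as
`t ↓ 0` for some `0 < ε < 1/2`, then `|(b t - b s)/(t-s)| · t^ε` is bounded on
`0 ≤ s < t ≤ T`. -/
theorem stmt1 (T : ℝ) (hT : 0 < T) (b b' : ℝ → ℝ) (ε : ℝ) (hε : 0 < ε) (hε' : ε < 1/2)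
    (hderiv : ∀ t ∈ Set.Ioc (0:ℝ) T, HasDerivAt b (b' t) t)
    (hb'cont : ContinuousOn b' (Set.Ioc 0 T))
    (hbcont : ContinuousOn b (Set.Icc 0 T))
    (hb0 : b 0 < 0)
    (hlim : ∃ L : ℝ, Filter.Tendsto (fun t => |b' t| * t ^ ε) (nhdsWithin 0 (Set.Ioi 0)) (nhds L)) :
    ∃ K > 0, ∀ s t : ℝ, 0 ≤ s → s < t → t ≤ T →
      |(b t - b s) / (t - s)| * t ^ ε < K :=
  stmt1_general T b b' ε hε hε' hderiv hb'cont hbcont hlim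
end

section
/- Let Q be a σ-finite measure on [0,∞) such that u(s,x) = ∫₀^∞ (1/√s) φ((x-θ)/√s) Q(dθ) is finite for all (s,x) ∈ (0,δ) × ℝ. Then u satisfies the heat equation ∂u/∂s = (1/2) ∂²u/∂x² on (0,δ) × ℝ, and for every e < 0, u(s,x) → 0 as (s,x) → (0,e). -/
/-!
Write `u(s, x) = ∫ p_s(x - θ) Q(dθ)` with the heat kernel `p_s(y) = φ(y/√s)/√s`, which solves
`∂ₛp = ½ ∂²ᵧp`. To differentiate under the integral, note that for `s` in a compact subinterval
of `(0, δ)`, `p_s(y)` times any polynomial in `y`, with `y` moving in a unit interval around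
`y₀`, is dominated by a constant times `exp(-y₀²/(2B))` for some `B < δ`; the latter is a constant
multiple of `p_B(y₀)`, hence `Q`-integrable by hypothesis.

At a boundary point `(0, e)` with `e < 0`, the support `[0, ∞)` of `Q` stays at distance
`≥ |e|/2` from `x`, and `|x - θ| ≥ |θ - e|/2`. This gives
`p_s(x - θ) ≤ p_s(e/4) · exp(-(e - θ)²/(2S))` for `8s ≤ S`; the second factor is integrable
and `p_s(e/4) → 0` as `s → 0`.
-/

open MeasureTheory

/-- The standard normal density. -/
noncomputable def stdNormalPDF (z : ℝ) : ℝ :=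
  (Real.sqrt (2 * Real.pi))⁻¹ * Real.exp (-z ^ 2 / 2)

open Real Filter Topology Set
open scoped Nat

lemma abs_pow_mul_exp_neg_mul_sq_le {c : ℝ} (hc : 0 < c) (m : ℕ) (y : ℝ) :
    |y| ^ m * exp (-(c * y ^ 2)) ≤ m ! * exp (1 / (4 * c)) := by
  have hpow : |y| ^ m ≤ m ! * exp |y| := by
    have := pow_div_factorial_le_exp _ (abs_nonneg y) m
    rwa [div_le_iff₀ (by positivity), mul_comm] at this
  have hquad : |y| - c * y ^ 2 ≤ 1 / (4 * c) := by
    rw [← sq_abs y, le_div_iff₀ (by positivity)]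
    nlinarith [sq_nonneg (2 * c * |y| - 1)]
  calc |y| ^ m * exp (-(c * y ^ 2)) ≤ m ! * exp |y| * exp (-(c * y ^ 2)) := by gcongr
    _ = m ! * exp (|y| - c * y ^ 2) := by rw [mul_assoc, ← exp_add, sub_eq_add_neg]
    _ ≤ m ! * exp (1 / (4 * c)) := by gcongr

lemma sq_le_mul_sq_add_of_abs_sub_le {ε y y₀ : ℝ} (hε : 0 < ε) (h : |y - y₀| ≤ 1) :
    y₀ ^ 2 ≤ (1 + ε) * y ^ 2 + (1 + ε⁻¹) := by
  have hd : (y₀ - y) ^ 2 ≤ 1 := by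
    rw [← sq_abs, abs_sub_comm]; nlinarith [abs_nonneg (y - y₀)]
  have hyoung : 2 * y * (y₀ - y) ≤ ε * y ^ 2 + ε⁻¹ * (y₀ - y) ^ 2 := by
    have := sq_nonneg (ε * y - (y₀ - y))
    have hinv : ε * ε⁻¹ = 1 := mul_inv_cancel₀ hε.ne'
    nlinarith [mul_nonneg (inv_nonneg.2 hε.le) this]
  nlinarith [mul_le_mul_of_nonneg_left hd (inv_nonneg.2 hε.le)]

lemma exists_abs_pow_mul_exp_neg_sq_le {b B : ℝ} (hb : 0 < b) (hbB : b < B) (m : ℕ) :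
    ∃ C, 0 ≤ C ∧ ∀ s y y₀ : ℝ, 0 < s → s ≤ b → |y - y₀| ≤ 1 →
      |y| ^ m * exp (-y ^ 2 / (2 * s)) ≤ C * exp (-y₀ ^ 2 / (2 * B)) := by
  set ε := (B - b) / (2 * b)
  set c := (B - b) / (4 * b * B)
  have hB : 0 < B := hb.trans hbB
  have hε : 0 < ε := div_pos (by linarith) (by positivity)
  have hc : 0 < c := div_pos (by linarith) (by positivity)
  refine ⟨m ! * exp (1 / (4 * c)) * exp ((1 + ε⁻¹) / (2 * B)), by positivity, ?_⟩
  intro s y y₀ hs hsb hy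
  -- `exp (-(c * y ^ 2))` absorbs `|y| ^ m`; the remaining Gaussian, of variance `B / (1 + ε) > b`,
  -- is wide enough to be recentred at `y₀`.
  have hsplit : -y ^ 2 / (2 * b) = -(c * y ^ 2) - (1 + ε) * y ^ 2 / (2 * B) := by
    simp only [ε, c]; field_simp; ring
  have hexp : -y ^ 2 / (2 * s) ≤ -(c * y ^ 2) + ((1 + ε⁻¹) / (2 * B) + -y₀ ^ 2 / (2 * B)) := by
    have h1 : -y ^ 2 / (2 * s) ≤ -y ^ 2 / (2 * b) := by
      rw [neg_div, neg_div, neg_le_neg_iff]; gcongr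
    have h2 : y₀ ^ 2 / (2 * B) ≤ ((1 + ε) * y ^ 2 + (1 + ε⁻¹)) / (2 * B) := by
      gcongr; exact sq_le_mul_sq_add_of_abs_sub_le hε hy
    rw [add_div] at h2
    linarith [neg_div (2 * B) (y₀ ^ 2)]
  calc |y| ^ m * exp (-y ^ 2 / (2 * s))
      ≤ |y| ^ m * (exp (-(c * y ^ 2)) * (exp ((1 + ε⁻¹) / (2 * B)) * exp (-y₀ ^ 2 / (2 * B)))) := by
        rw [← exp_add, ← exp_add]; gcongr
    _ = |y| ^ m * exp (-(c * y ^ 2)) * exp ((1 + ε⁻¹) / (2 * B)) * exp (-y₀ ^ 2 / (2 * B)) := by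
        ring
    _ ≤ m ! * exp (1 / (4 * c)) * exp ((1 + ε⁻¹) / (2 * B)) * exp (-y₀ ^ 2 / (2 * B)) := by
        gcongr ?_ * _ * _; exact abs_pow_mul_exp_neg_mul_sq_le hc m y

noncomputable def heatKernel (t y : ℝ) : ℝ :=
  (√(2 * π * t))⁻¹ * exp (-y ^ 2 / (2 * t))

lemma heatKernel_nonneg (t y : ℝ) : 0 ≤ heatKernel t y := by
  unfold heatKernel; positivity

@[fun_prop]
lemma continuous_heatKernel (t : ℝ) : Continuous (heatKernel t) := by
  unfold heatKernel; fun_prop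

lemma sqrt_inv_mul_stdNormalPDF {t : ℝ} (ht : 0 < t) (y : ℝ) :
    (√t)⁻¹ * stdNormalPDF (y / √t) = heatKernel t y := by
  unfold stdNormalPDF heatKernel
  rw [div_pow, sq_sqrt ht.le, sqrt_mul (by positivity) t, mul_inv]
  ring_nf

lemma sqrt_mul_heatKernel {t : ℝ} (ht : 0 < t) (y : ℝ) :
    √(2 * π * t) * heatKernel t y = exp (-y ^ 2 / (2 * t)) := by
  unfold heatKernel
  rw [← mul_assoc, mul_inv_cancel₀ (by positivity), one_mul]

lemma hasDerivAt_heatKernel {t : ℝ} (ht : 0 < t) (y : ℝ) :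
    HasDerivAt (heatKernel t) (-(y / t) * heatKernel t y) y := by
  refine (((hasDerivAt_pow 2 y).neg.div_const (2 * t)).exp.const_mul
    (√(2 * π * t))⁻¹).congr_deriv ?_
  simp only [heatKernel, Pi.neg_apply]
  field_simp
  ring

lemma hasDerivAt_neg_div_mul_heatKernel {t : ℝ} (ht : 0 < t) (y : ℝ) :
    HasDerivAt (fun y => -(y / t) * heatKernel t y)
      ((y ^ 2 / t ^ 2 - 1 / t) * heatKernel t y) y := by
  refine (((hasDerivAt_id y).div_const t).neg.mul (hasDerivAt_heatKernel ht y)).congr_deriv ?_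
  simp only [id, Pi.neg_apply]
  ring

lemma hasDerivAt_heatKernel_time {t : ℝ} (ht : 0 < t) (y : ℝ) :
    HasDerivAt (fun t => heatKernel t y)
      (1 / 2 * ((y ^ 2 / t ^ 2 - 1 / t) * heatKernel t y)) t := by
  have hpos : 0 < 2 * π * t := by positivity
  have hsqrt := (((hasDerivAt_id t).const_mul (2 * π)).sqrt hpos.ne').inv (by simp; positivity)
  have hexp := ((hasDerivAt_inv ht.ne').const_mul (-y ^ 2 / 2)).exp
  refine (hsqrt.mul hexp |>.congr_of_eventuallyEq ?_).congr_deriv ?_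
  · filter_upwards with t
    simp only [heatKernel, id, Pi.mul_apply, Pi.inv_apply]
    ring_nf
  simp only [heatKernel, id, Pi.inv_apply]
  have hsq : √(2 * π * t) ^ 2 = 2 * π * t := sq_sqrt hpos.le
  field_simp
  rw [hsq]
  ring_nf

lemma tendsto_heatKernel_nhdsGT_zero {y : ℝ} (hy : y ≠ 0) :
    Tendsto (fun t => heatKernel t y) (𝓝[>] 0) (𝓝 0) := by
  have h := ((tendsto_rpow_mul_exp_neg_mul_atTop_nhds_zero (1 / 2) (y ^ 2 / 2)
    (by positivity)).comp tendsto_inv_nhdsGT_zero).const_mul (√(2 * π))⁻¹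
  rw [mul_zero] at h
  refine h.congr' ?_
  filter_upwards [self_mem_nhdsWithin] with t (ht : 0 < t)
  simp only [Function.comp, heatKernel]
  rw [← sqrt_eq_rpow, sqrt_inv, sqrt_mul (by positivity) t, mul_inv]
  ring_nf

lemma exists_abs_pow_mul_heatKernel_le {a b B : ℝ} (ha : 0 < a) (hab : a ≤ b) (hbB : b < B)
    (m : ℕ) : ∃ C, 0 ≤ C ∧ ∀ s y y₀ : ℝ, a ≤ s → s ≤ b → |y - y₀| ≤ 1 →
      |y| ^ m * heatKernel s y ≤ C * exp (-y₀ ^ 2 / (2 * B)) := by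
  obtain ⟨C, hC0, hC⟩ := exists_abs_pow_mul_exp_neg_sq_le (ha.trans_le hab) hbB m
  refine ⟨(√(2 * π * a))⁻¹ * C, by positivity, fun s y y₀ has hsb hy => ?_⟩
  have hs : 0 < s := ha.trans_le has
  calc |y| ^ m * heatKernel s y = (√(2 * π * s))⁻¹ * (|y| ^ m * exp (-y ^ 2 / (2 * s))) := by
        unfold heatKernel; ring
    _ ≤ (√(2 * π * a))⁻¹ * (C * exp (-y₀ ^ 2 / (2 * B))) :=
        mul_le_mul (inv_anti₀ (by positivity) (sqrt_le_sqrt (by gcongr))) (hC s y y₀ hs hsb hy)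
          (by positivity) (by positivity)
    _ = (√(2 * π * a))⁻¹ * C * exp (-y₀ ^ 2 / (2 * B)) := (mul_assoc _ _ _).symm

lemma exists_heatKernel_bound {a b B : ℝ} (ha : 0 < a) (hab : a ≤ b) (hbB : b < B) :
    ∃ C, ∀ s y y₀ : ℝ, a ≤ s → s ≤ b → |y - y₀| ≤ 1 →
      |heatKernel s y| ≤ C * exp (-y₀ ^ 2 / (2 * B)) ∧
      |-(y / s) * heatKernel s y| ≤ C * exp (-y₀ ^ 2 / (2 * B)) ∧
      |(y ^ 2 / s ^ 2 - 1 / s) * heatKernel s y| ≤ C * exp (-y₀ ^ 2 / (2 * B)) := by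
  choose C hC0 hC using exists_abs_pow_mul_heatKernel_le ha hab hbB
  refine ⟨C 0 + C 1 / a + C 2 / a ^ 2 + C 0 / a, fun s y y₀ has hsb hy => ?_⟩
  have hs : 0 < s := ha.trans_le has
  set E := exp (-y₀ ^ 2 / (2 * B))
  have hK := heatKernel_nonneg s y
  have h0 := hC 0 s y y₀ has hsb hy
  have h1 := hC 1 s y y₀ has hsb hy
  have h2 := hC 2 s y y₀ has hsb hy
  simp only [pow_zero, one_mul, pow_one, sq_abs] at h0 h1 h2
  have hinv : 1 / s ≤ 1 / a := one_div_le_one_div_of_le ha has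
  have hinv2 : 1 / s ^ 2 ≤ 1 / a ^ 2 := one_div_le_one_div_of_le (by positivity) (by gcongr)
  have t0 : 1 / s * heatKernel s y ≤ 1 / a * (C 0 * E) := mul_le_mul hinv h0 hK (by positivity)
  have t1 : 1 / s * (|y| * heatKernel s y) ≤ 1 / a * (C 1 * E) :=
    mul_le_mul hinv h1 (by positivity) (by positivity)
  have t2 : 1 / s ^ 2 * (y ^ 2 * heatKernel s y) ≤ 1 / a ^ 2 * (C 2 * E) :=
    mul_le_mul hinv2 h2 (by positivity) (by positivity)
  have hsum : (C 0 + C 1 / a + C 2 / a ^ 2 + C 0 / a) * E =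
      C 0 * E + 1 / a * (C 1 * E) + 1 / a ^ 2 * (C 2 * E) + 1 / a * (C 0 * E) := by ring
  have hE : ∀ m, 0 ≤ C m * E ∧ 0 ≤ 1 / a * (C m * E) ∧ 0 ≤ 1 / a ^ 2 * (C m * E) :=
    fun m => by have := hC0 m; refine ⟨?_, ?_, ?_⟩ <;> positivity
  obtain ⟨-, h0a, -⟩ := hE 0
  obtain ⟨-, h1a, -⟩ := hE 1
  obtain ⟨-, -, h2a⟩ := hE 2
  refine ⟨?_, ?_, ?_⟩
  · rw [abs_of_nonneg hK]; linarith
  · rw [abs_mul, abs_neg, abs_div, abs_of_pos hs, abs_of_nonneg hK]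
    have : |y| / s * heatKernel s y = 1 / s * (|y| * heatKernel s y) := by ring
    linarith
  · rw [abs_mul, abs_of_nonneg hK]
    have habs : |y ^ 2 / s ^ 2 - 1 / s| ≤ y ^ 2 / s ^ 2 + 1 / s := by
      have : 0 ≤ y ^ 2 / s ^ 2 := by positivity
      have : 0 ≤ 1 / s := by positivity
      rw [abs_le]; constructor <;> linarith
    have : (y ^ 2 / s ^ 2 + 1 / s) * heatKernel s y =
        1 / s ^ 2 * (y ^ 2 * heatKernel s y) + 1 / s * heatKernel s y := by ring
    linarith [mul_le_mul_of_nonneg_right habs hK]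

section HeatIntegral

variable {Q : Measure ℝ}

lemma hasDerivAt_integral_comp_sub {f f' g : ℝ → ℝ} {x₀ : ℝ}
    (hf : ∀ y, HasDerivAt f (f' y) y) (hf' : Continuous f')
    (hfi : Integrable (fun θ => f (x₀ - θ)) Q) (hg : Integrable g Q)
    (hbound : ∀ θ, ∀ x ∈ Metric.ball x₀ 1, |f' (x - θ)| ≤ g θ) :
    HasDerivAt (fun x => ∫ θ, f (x - θ) ∂Q) (∫ θ, f' (x₀ - θ) ∂Q) x₀ := by
  have hfc : Continuous f := continuous_iff_continuousAt.2 fun y => (hf y).continuousAt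
  exact (hasDerivAt_integral_of_dominated_loc_of_deriv_le (Metric.ball_mem_nhds x₀ one_pos)
    (.of_forall fun x => (hfc.comp (continuous_sub_left x)).aestronglyMeasurable)
    hfi ((hf'.comp (continuous_sub_left x₀)).aestronglyMeasurable) (ae_of_all _ hbound) hg
    (ae_of_all _ fun θ x _ => (hf (x - θ)).comp_sub_const x θ)).2

variable {t B x₀ : ℝ}

lemma exists_integrable_heatKernel_bound (ht : 0 < t) (htB : t < B)
    (hQ : Integrable (fun θ => exp (-(x₀ - θ) ^ 2 / (2 * B))) Q) :
    ∃ g : ℝ → ℝ, Integrable g Q ∧ ∀ θ, ∀ x ∈ Metric.ball x₀ 1,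
      |heatKernel t (x - θ)| ≤ g θ ∧
      |-((x - θ) / t) * heatKernel t (x - θ)| ≤ g θ ∧
      |((x - θ) ^ 2 / t ^ 2 - 1 / t) * heatKernel t (x - θ)| ≤ g θ := by
  obtain ⟨C, hC⟩ := exists_heatKernel_bound ht le_rfl htB
  refine ⟨fun θ => C * exp (-(x₀ - θ) ^ 2 / (2 * B)), hQ.const_mul C, fun θ x hx => ?_⟩
  refine hC t (x - θ) (x₀ - θ) le_rfl le_rfl ?_
  rw [sub_sub_sub_cancel_right, ← Real.dist_eq]
  exact (Metric.mem_ball.1 hx).le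

lemma hasDerivAt_integral_heatKernel (ht : 0 < t) (htB : t < B)
    (hQ : Integrable (fun θ => exp (-(x₀ - θ) ^ 2 / (2 * B))) Q) :
    HasDerivAt (fun x => ∫ θ, heatKernel t (x - θ) ∂Q)
      (∫ θ, -((x₀ - θ) / t) * heatKernel t (x₀ - θ) ∂Q) x₀ := by
  obtain ⟨g, hg, hbound⟩ := exists_integrable_heatKernel_bound ht htB hQ
  refine hasDerivAt_integral_comp_sub (hasDerivAt_heatKernel ht) (by fun_prop) ?_ hg
    fun θ x hx => (hbound θ x hx).2.1
  exact hg.mono' (by fun_prop)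
    (ae_of_all _ fun θ => (hbound θ x₀ (Metric.mem_ball_self one_pos)).1)

lemma hasDerivAt_integral_neg_div_mul_heatKernel (ht : 0 < t) (htB : t < B)
    (hQ : Integrable (fun θ => exp (-(x₀ - θ) ^ 2 / (2 * B))) Q) :
    HasDerivAt (fun x => ∫ θ, -((x - θ) / t) * heatKernel t (x - θ) ∂Q)
      (∫ θ, ((x₀ - θ) ^ 2 / t ^ 2 - 1 / t) * heatKernel t (x₀ - θ) ∂Q) x₀ := by
  obtain ⟨g, hg, hbound⟩ := exists_integrable_heatKernel_bound ht htB hQ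
  refine hasDerivAt_integral_comp_sub (f := fun y => -(y / t) * heatKernel t y)
    (hasDerivAt_neg_div_mul_heatKernel ht) (by fun_prop) ?_ hg
    fun θ x hx => (hbound θ x hx).2.2
  exact hg.mono' (by fun_prop)
    (ae_of_all _ fun θ => (hbound θ x₀ (Metric.mem_ball_self one_pos)).2.1)

lemma hasDerivAt_integral_heatKernel_time (ht : 0 < t) (htB : t < B)
    (hQ : Integrable (fun θ => exp (-(x₀ - θ) ^ 2 / (2 * B))) Q) :
    HasDerivAt (fun t => ∫ θ, heatKernel t (x₀ - θ) ∂Q)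
      (∫ θ, 1 / 2 * (((x₀ - θ) ^ 2 / t ^ 2 - 1 / t) * heatKernel t (x₀ - θ)) ∂Q) t := by
  obtain ⟨C, hC⟩ := exists_heatKernel_bound (half_pos ht)
    (show t / 2 ≤ (t + B) / 2 by linarith) (show (t + B) / 2 < B by linarith)
  have hbound : ∀ θ, ∀ s ∈ Ioo (t / 2) ((t + B) / 2), _ := fun θ s hs =>
    hC s (x₀ - θ) (x₀ - θ) hs.1.le hs.2.le (by simp)
  have hint := hQ.const_mul C
  refine (hasDerivAt_integral_of_dominated_loc_of_deriv_le
    (bound := fun θ => 1 / 2 * (C * exp (-(x₀ - θ) ^ 2 / (2 * B))))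
    (Ioo_mem_nhds (show t / 2 < t by linarith) (show t < (t + B) / 2 by linarith))
    (.of_forall fun s =>
      (continuous_heatKernel s |>.comp (continuous_sub_left x₀)).aestronglyMeasurable)
    (hint.mono' (by fun_prop)
      (ae_of_all _ fun θ => (hbound θ t ⟨by linarith, by linarith⟩).1))
    (by fun_prop) (ae_of_all _ fun θ s hs => ?_) (hint.const_mul _)
    (ae_of_all _ fun θ s hs => hasDerivAt_heatKernel_time (by linarith [hs.1]) _)).2
  rw [Real.norm_eq_abs, abs_mul, abs_of_pos one_half_pos]
  exact mul_le_mul_of_nonneg_left (hbound θ s hs).2.2 one_half_pos.le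

theorem deriv_integral_heatKernel_time_eq_half_iteratedDeriv {t B : ℝ} (ht : 0 < t) (htB : t < B)
    (hQ : ∀ x, Integrable (fun θ => exp (-(x - θ) ^ 2 / (2 * B))) Q) (x : ℝ) :
    deriv (fun t => ∫ θ, heatKernel t (x - θ) ∂Q) t =
      1 / 2 * iteratedDeriv 2 (fun x => ∫ θ, heatKernel t (x - θ) ∂Q) x := by
  have hderiv : deriv (fun x => ∫ θ, heatKernel t (x - θ) ∂Q) =
      fun x => ∫ θ, -((x - θ) / t) * heatKernel t (x - θ) ∂Q :=
    funext fun x => (hasDerivAt_integral_heatKernel ht htB (hQ x)).deriv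
  rw [iteratedDeriv_succ, iteratedDeriv_one, hderiv,
    (hasDerivAt_integral_neg_div_mul_heatKernel ht htB (hQ x)).deriv,
    (hasDerivAt_integral_heatKernel_time ht htB (hQ x)).deriv, integral_const_mul]

lemma heatKernel_sub_le_mul_exp {s S e x θ : ℝ} (hs : 0 < s) (hsS : 8 * s ≤ S) (he : e ≤ 0)
    (hx : x ≤ e / 2) (hθ : 0 ≤ θ) :
    heatKernel s (x - θ) ≤ heatKernel s (e / 4) * exp (-(e - θ) ^ 2 / (2 * S)) := by
  have hS : 0 < S := by linarith
  have hd₁ : e ^ 2 / 4 ≤ (x - θ) ^ 2 := by nlinarith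
  have hd₂ : (e - θ) ^ 2 / 4 ≤ (x - θ) ^ 2 := by nlinarith
  have h₁ : (e / 4) ^ 2 / (2 * s) ≤ (x - θ) ^ 2 / (8 * s) := by
    rw [div_le_div_iff₀ (by positivity) (by positivity)]; nlinarith
  have h₂ : (e - θ) ^ 2 / (2 * S) ≤ (x - θ) ^ 2 / (4 * s) := by
    rw [div_le_div_iff₀ (by positivity) (by positivity)]; nlinarith [sq_nonneg (e - θ)]
  have h₃ : (x - θ) ^ 2 / (2 * s) = (x - θ) ^ 2 / (8 * s) + (x - θ) ^ 2 / (4 * s) +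
      (x - θ) ^ 2 / (8 * s) := by
    field_simp; ring
  have h₄ : 0 ≤ (x - θ) ^ 2 / (8 * s) := by positivity
  simp only [heatKernel]
  rw [mul_assoc _ (exp _), ← exp_add]
  gcongr
  simp only [neg_div]
  linarith

theorem tendsto_integral_heatKernel_of_neg (hQ₀ : Q (Iio 0) = 0) {S e : ℝ} (hS : 0 < S)
    (he : e < 0)
    (hQ : Integrable (fun θ => exp (-(e - θ) ^ 2 / (2 * S))) Q) :
    Tendsto (fun q : ℝ × ℝ => ∫ θ, heatKernel q.1 (q.2 - θ) ∂Q)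
      (𝓝[Ioi 0 ×ˢ univ] (0, e)) (𝓝 0) := by
  have hθ : Ici 0 ∈ ae Q := by rwa [mem_ae_iff, compl_Ici]
  have hfst : Tendsto Prod.fst (𝓝[Ioi 0 ×ˢ univ] ((0 : ℝ), e)) (𝓝[>] 0) :=
    tendsto_nhdsWithin_of_tendsto_nhds_of_eventually_within _
      (continuous_fst.tendsto _ |>.mono_left nhdsWithin_le_nhds)
      (eventually_nhdsWithin_of_forall fun q hq => hq.1)
  have hupper := ((tendsto_heatKernel_nhdsGT_zero (by linarith : e / 4 ≠ 0)).comp hfst).mul_const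
    (∫ θ, exp (-(e - θ) ^ 2 / (2 * S)) ∂Q)
  rw [zero_mul] at hupper
  have hnear : ∀ᶠ q in 𝓝[Ioi 0 ×ˢ univ] ((0 : ℝ), e),
      q ∈ Ioi 0 ×ˢ univ ∩ Iio (S / 8) ×ˢ Iio (e / 2) :=
    inter_mem self_mem_nhdsWithin (mem_nhdsWithin_of_mem_nhds
      (prod_mem_nhds (Iio_mem_nhds (by positivity)) (Iio_mem_nhds (by linarith))))
  refine squeeze_zero' (.of_forall fun q => integral_nonneg fun θ => heatKernel_nonneg _ _) ?_
    hupper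
  filter_upwards [hnear] with ⟨s, x⟩ ⟨⟨hs, _⟩, hsS, hx⟩
  have hbound : ∀ᵐ θ ∂Q,
      heatKernel s (x - θ) ≤ heatKernel s (e / 4) * exp (-(e - θ) ^ 2 / (2 * S)) := by
    filter_upwards [hθ] with θ hθ
    exact heatKernel_sub_le_mul_exp hs (by linarith [show s < S / 8 from hsS]) he.le hx.le hθ
  have hint := hQ.const_mul (heatKernel s (e / 4))
  calc ∫ θ, heatKernel s (x - θ) ∂Q
      ≤ ∫ θ, heatKernel s (e / 4) * exp (-(e - θ) ^ 2 / (2 * S)) ∂Q := by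
        refine integral_mono_ae (hint.mono' (by fun_prop) ?_) hint hbound
        filter_upwards [hbound] with θ hθ
        rwa [Real.norm_eq_abs, abs_of_nonneg (heatKernel_nonneg _ _)]
    _ = heatKernel s (e / 4) * ∫ θ, exp (-(e - θ) ^ 2 / (2 * S)) ∂Q := integral_const_mul _ _

end HeatIntegral

theorem stmt3_general (δ : ℝ) (hδ : 0 < δ) (Q : Measure ℝ)
    (hQsupp : Q (Set.Iio 0) = 0)
    (u : ℝ → ℝ → ℝ)
    (hu : ∀ s x : ℝ, u s x = ∫ θ, (Real.sqrt s)⁻¹ * stdNormalPDF ((x - θ) / Real.sqrt s) ∂Q)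
    (hfin : ∀ s x : ℝ, 0 < s → s < δ →
      Integrable (fun θ => (Real.sqrt s)⁻¹ * stdNormalPDF ((x - θ) / Real.sqrt s)) Q) :
    (∀ s ∈ Set.Ioo (0:ℝ) δ, ∀ x : ℝ,
        deriv (fun s' => u s' x) s = (1/2) * iteratedDeriv 2 (fun x' => u s x') x)
    ∧ ∀ e : ℝ, e < 0 →
        Filter.Tendsto (fun q : ℝ × ℝ => u q.1 q.2)
          (nhdsWithin ((0 : ℝ), e) (Set.Ioi 0 ×ˢ Set.univ)) (nhds 0) := by
  have hu' : ∀ s, 0 < s → u s = fun x => ∫ θ, heatKernel s (x - θ) ∂Q := fun s hs =>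
    funext fun x => by simp only [hu, sqrt_inv_mul_stdNormalPDF hs]
  have hQ : ∀ B, 0 < B → B < δ → ∀ x, Integrable (fun θ => exp (-(x - θ) ^ 2 / (2 * B))) Q :=
    fun B hB hBδ x => ((hfin B x hB hBδ).const_mul √(2 * π * B)).congr (ae_of_all _ fun θ => by
      simp only [sqrt_inv_mul_stdNormalPDF hB, sqrt_mul_heatKernel hB])
  refine ⟨fun s ⟨hs, hsδ⟩ x => ?_, fun e he => ?_⟩
  · have hev : (fun s' => u s' x) =ᶠ[𝓝 s] fun s' => ∫ θ, heatKernel s' (x - θ) ∂Q :=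
      eventually_of_mem (Ioi_mem_nhds hs) fun s' hs' => congrFun (hu' s' hs') x
    rw [hev.deriv_eq, hu' s hs]
    exact deriv_integral_heatKernel_time_eq_half_iteratedDeriv hs (by linarith : s < (s + δ) / 2)
      (hQ _ (by linarith) (by linarith)) x
  · refine (tendsto_integral_heatKernel_of_neg hQsupp (half_pos hδ) he
      (hQ _ (half_pos hδ) (half_lt_self hδ) e)).congr' ?_
    filter_upwards [self_mem_nhdsWithin] with q hq
    exact (congrFun (hu' q.1 hq.1) q.2).symm

/-- Widder, direction (2) ⟹ (1): if `Q` is a σ-finite measure on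
`[0,∞)` such that `u(s,x) = ∫ φ((x-θ)/√s)/√s Q(dθ)` is finite on `(0,δ) × ℝ`,
then `u` solves the heat equation `∂u/∂s = (1/2) ∂²u/∂x²` there, and
`u(s,x) → 0` as `(s,x) → (0,e)` for every `e < 0`. -/
theorem stmt3 (δ : ℝ) (hδ : 0 < δ) (Q : Measure ℝ) [SigmaFinite Q]
    (hQsupp : Q (Set.Iio 0) = 0)
    (u : ℝ → ℝ → ℝ)
    (hu : ∀ s x : ℝ, u s x = ∫ θ, (Real.sqrt s)⁻¹ * stdNormalPDF ((x - θ) / Real.sqrt s) ∂Q)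
    (hfin : ∀ s x : ℝ, 0 < s → s < δ →
      Integrable (fun θ => (Real.sqrt s)⁻¹ * stdNormalPDF ((x - θ) / Real.sqrt s)) Q) :
    (∀ s ∈ Set.Ioo (0:ℝ) δ, ∀ x : ℝ,
        deriv (fun s' => u s' x) s = (1/2) * iteratedDeriv 2 (fun x' => u s x') x)
    ∧ ∀ e : ℝ, e < 0 →
        Filter.Tendsto (fun q : ℝ × ℝ => u q.1 q.2)
          (nhdsWithin ((0 : ℝ), e) (Set.Ioi 0 ×ˢ Set.univ)) (nhds 0) :=
  stmt3_general δ hδ Q hQsupp u hu hfin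
end
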